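/- arXiv:2010.12936 — 5 statements merged into one kernel-verified Lean document; each statement's English description precedes it below -/
import Mathlib

section
/- In an algebra A over a field of characteristic not 2 satisfying ⟨a,a,a⟩ = 0 and ⟨aa,a,a⟩ = 0, where ⟨a,b,c⟩ = (ab)c - a(bc) + b(ac), define e_1 = x and e_{n+1} = x·e_n for a fixed element x. Then e_k · e_l = 0 for all k > 1 and l > 0. -/
/-!
Over a field of characteristic ≠ 2 the hypotheses amount to (aa)a = 0 and (aa)(aa) = 0, which
may then be polarized. Induct on N = k + l. Substituting x and powers e_p into the polarized
identities gives, modulo products of lower degree, e_{p+1}e_q = -e_{q+1}e_p and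
e_{p+1}e_{q+1} = -e_{q+1}e_{p+1} in degree N. Together they make e_ie_j (i ≥ 3, j ≥ 2)
independent of i and equal to its own negative. Then e_2e_{N-2} = 0 comes from the odd part of
(aa)(aa) = 0 at a = x ± e_{N-3}, and e_{N-1}x = 0 from the polarization of (aa)a = 0 at a = x,
b = e_{N-2}.
-/

/-- The Leibniz discriminant ⟨a,b,c⟩ = (ab)c - a(bc) + b(ac). -/
def leibTriple {A : Type*} [NonUnitalNonAssocRing A] (a b c : A) : A :=
  (a * b) * c - a * (b * c) + b * (a * c)

theorem eq_zero_of_add_self_eq_zero {K M : Type*} [DivisionRing K] [AddCommGroup M] [Module K M]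
    (hchar : (2 : K) ≠ 0) {v : M} (hv : v + v = 0) : v = 0 :=
  (smul_eq_zero.mp (by rwa [two_smul])).resolve_left hchar

section Polarization

variable {A : Type*} [NonUnitalNonAssocRing A]

theorem cube_polarization (hcube : ∀ a : A, a * a * a = 0)
    (hhalf : ∀ v : A, v + v = 0 → v = 0) (a b : A) : a * a * b + a * b * a + b * a * a = 0 := by
  apply hhalf
  linear_combination (norm := (simp only [mul_add, add_mul, mul_sub, sub_mul]; abel))
    hcube (a + b) - hcube (a - b) - 2 • hcube b

theorem cube_full_polarization (hcube : ∀ a : A, a * a * a = 0)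
    (hhalf : ∀ v : A, v + v = 0 → v = 0) (a b c : A) :
    a * b * c + b * a * c + a * c * b + c * a * b + b * c * a + c * b * a = 0 := by
  linear_combination (norm := (simp only [mul_add, add_mul]; abel))
    cube_polarization hcube hhalf (a + c) b - cube_polarization hcube hhalf a b
      - cube_polarization hcube hhalf c b

theorem fourth_polarization (hsq : ∀ a : A, a * a * (a * a) = 0)
    (hhalf : ∀ v : A, v + v = 0 → v = 0) (a b : A) :
    a * a * (b * b) + b * b * (a * a) + (a * b + b * a) * (a * b + b * a) = 0 := by
  apply hhalf
  linear_combination (norm := (simp only [mul_add, add_mul, mul_sub, sub_mul]; abel))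
    hsq (a + b) + hsq (a - b) - 2 • hsq a - 2 • hsq b

theorem fourth_polarization_right (hsq : ∀ a : A, a * a * (a * a) = 0)
    (hhalf : ∀ v : A, v + v = 0 → v = 0) (a b d : A) :
    a * a * (b * d + d * b) + (b * d + d * b) * (a * a)
      + (a * b + b * a) * (a * d + d * a) + (a * d + d * a) * (a * b + b * a) = 0 := by
  linear_combination (norm := (simp only [mul_add, add_mul]; abel))
    fourth_polarization hsq hhalf a (b + d) - fourth_polarization hsq hhalf a b
      - fourth_polarization hsq hhalf a d

theorem fourth_odd_part (hsq : ∀ a : A, a * a * (a * a) = 0)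
    (hhalf : ∀ v : A, v + v = 0 → v = 0) (a z : A) :
    a * a * (a * z + z * a) + (a * z + z * a) * (a * a)
      + (a * z + z * a) * (z * z) + z * z * (a * z + z * a) = 0 := by
  apply hhalf
  linear_combination (norm := (simp only [mul_add, add_mul, mul_sub, sub_mul]; abel))
    hsq (a + z) - hsq (a - z)

end Polarization

section RightNormedPowers

variable {A : Type*} [NonUnitalNonAssocRing A]

structure IsRightNormedPowers (x : A) (e : ℕ → A) : Prop where
  one : e 1 = x
  succ : ∀ n, 1 ≤ n → e (n + 1) = x * e n

def ProductsVanishBelow (e : ℕ → A) (N : ℕ) : Prop :=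
  ∀ k l, 2 ≤ k → 1 ≤ l → k + l < N → e k * e l = 0

namespace IsRightNormedPowers

variable {x : A} {e : ℕ → A} {N : ℕ}

theorem two_eq (he : IsRightNormedPowers x e) : e 2 = x * x := by
  rw [he.succ 1 le_rfl, he.one]

theorem mul_self_eq_zero (hsq : ∀ a : A, a * a * (a * a) = 0)
    (hhalf : ∀ v : A, v + v = 0 → v = 0) (he : IsRightNormedPowers x e) {j : ℕ} (hj : 2 ≤ j)
    (hx : ∀ p, 2 ≤ p → p < j → e p * x = 0) : e j * e j = 0 := by
  induction j, hj using Nat.le_induction with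
  | base => rw [he.two_eq]; exact hsq x
  | succ p hp ih =>
    have h := fourth_polarization hsq hhalf x (e p)
    rw [← he.succ p (by omega), hx p hp p.lt_succ_self,
      ih fun q hq hqp => hx q hq (hqp.trans p.lt_succ_self)] at h
    simpa only [mul_zero, zero_mul, add_zero, zero_add] using h

theorem mul_x_eq_zero (he : IsRightNormedPowers x e) (hN : ProductsVanishBelow e N) {p : ℕ}
    (hp : 2 ≤ p) (h : p + 1 < N) : e p * x = 0 := by
  simpa only [he.one] using hN p 1 hp le_rfl h

theorem succ_mul_add_succ_mul_eq_zero (hcube : ∀ a : A, a * a * a = 0)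
    (hhalf : ∀ v : A, v + v = 0 → v = 0) (he : IsRightNormedPowers x e)
    (hN : ProductsVanishBelow e N) {p q : ℕ} (hp : 2 ≤ p) (hq : 2 ≤ q) (hpq : p + q + 1 = N) :
    e (p + 1) * e q + e (q + 1) * e p = 0 := by
  have h := cube_full_polarization hcube hhalf x (e p) (e q)
  rw [← he.succ p (by omega), ← he.succ q (by omega), he.mul_x_eq_zero hN hp (by omega),
    he.mul_x_eq_zero hN hq (by omega), hN p q hp (by omega) (by omega),
    hN q p hq (by omega) (by omega)] at h
  simpa only [zero_mul, add_zero, zero_add] using h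

theorem succ_mul_succ_add_succ_mul_succ_eq_zero (hsq : ∀ a : A, a * a * (a * a) = 0)
    (hhalf : ∀ v : A, v + v = 0 → v = 0) (he : IsRightNormedPowers x e)
    (hN : ProductsVanishBelow e N) {p q : ℕ} (hp : 2 ≤ p) (hq : 2 ≤ q) (hpq : p + q + 2 = N) :
    e (p + 1) * e (q + 1) + e (q + 1) * e (p + 1) = 0 := by
  have h := fourth_polarization_right hsq hhalf x (e p) (e q)
  rw [← he.succ p (by omega), ← he.succ q (by omega), he.mul_x_eq_zero hN hp (by omega),
    he.mul_x_eq_zero hN hq (by omega), hN p q hp (by omega) (by omega),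
    hN q p hq (by omega) (by omega)] at h
  simpa only [zero_mul, mul_zero, add_zero, zero_add] using h

theorem succ_mul_eq_mul_succ (hcube : ∀ a : A, a * a * a = 0)
    (hsq : ∀ a : A, a * a * (a * a) = 0) (hhalf : ∀ v : A, v + v = 0 → v = 0)
    (he : IsRightNormedPowers x e) (hN : ProductsVanishBelow e N) {i j : ℕ} (hi : 3 ≤ i)
    (hj : 2 ≤ j) (hij : i + j + 1 = N) :
    e (i + 1) * e j = e i * e (j + 1) := by
  obtain ⟨q, rfl⟩ : ∃ q, i = q + 1 := ⟨i - 1, by omega⟩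
  have h₁ := he.succ_mul_add_succ_mul_eq_zero hcube hhalf hN (p := q + 1) (by omega) hj hij
  have h₂ := he.succ_mul_succ_add_succ_mul_succ_eq_zero hsq hhalf hN hj (q := q) (by omega)
    (by omega)
  exact (add_eq_zero_iff_eq_neg.mp h₁).trans (add_eq_zero_iff_neg_eq.mp h₂)

theorem mul_eq_three_mul (hcube : ∀ a : A, a * a * a = 0) (hsq : ∀ a : A, a * a * (a * a) = 0)
    (hhalf : ∀ v : A, v + v = 0 → v = 0) (he : IsRightNormedPowers x e)
    (hN : ProductsVanishBelow e N) {m i j : ℕ} (hm : m + 3 = N) (hi : 3 ≤ i) (hj : 2 ≤ j)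
    (hij : i + j = N) : e i * e j = e 3 * e m := by
  induction i, hi using Nat.le_induction generalizing j with
  | base =>
    obtain rfl : j = m := by omega
    rfl
  | succ i hi ih =>
    rw [he.succ_mul_eq_mul_succ hcube hsq hhalf hN hi hj (by omega)]
    exact ih (by omega) (by omega)

theorem mul_eq_zero_of_three_le (hcube : ∀ a : A, a * a * a = 0)
    (hsq : ∀ a : A, a * a * (a * a) = 0) (hhalf : ∀ v : A, v + v = 0 → v = 0)
    (he : IsRightNormedPowers x e) (hN : ProductsVanishBelow e N) {i j : ℕ} (hi : 3 ≤ i)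
    (hj : 2 ≤ j) (hij : i + j = N) : e i * e j = 0 := by
  obtain ⟨m, rfl⟩ : ∃ m, N = m + 3 := ⟨N - 3, by omega⟩
  rw [he.mul_eq_three_mul hcube hsq hhalf hN rfl hi hj hij]
  apply hhalf
  -- This relation joins the two ends `e 3 * e m` and `e (m + 1) * e 2` of the chain.
  have h := he.succ_mul_add_succ_mul_eq_zero hcube hhalf hN le_rfl (q := m) (by omega) (by omega)
  rwa [he.mul_eq_three_mul hcube hsq hhalf hN rfl (i := m + 1) (by omega) le_rfl (by omega)] at h

theorem two_mul_eq_zero (hcube : ∀ a : A, a * a * a = 0) (hsq : ∀ a : A, a * a * (a * a) = 0)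
    (hhalf : ∀ v : A, v + v = 0 → v = 0) (he : IsRightNormedPowers x e)
    (hN : ProductsVanishBelow e N) {m : ℕ} (hm : 1 ≤ m) (hmN : m + 3 = N) :
    e 2 * e (m + 1) = 0 := by
  rcases hm.eq_or_lt with rfl | hm
  · exact he.mul_self_eq_zero hsq hhalf le_rfl fun p hp hp2 => absurd hp2 (by omega)
  have hmm : e m * e m = 0 :=
    he.mul_self_eq_zero hsq hhalf hm fun p hp hpm => he.mul_x_eq_zero hN hp (by omega)
  have h := fourth_odd_part hsq hhalf x (e m)
  rw [← he.succ m (by omega), he.mul_x_eq_zero hN hm (by omega), hmm, ← he.two_eq] at h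
  simp only [add_zero, mul_zero, zero_mul] at h
  rwa [he.mul_eq_zero_of_three_le hcube hsq hhalf hN (i := m + 1) (by omega) le_rfl (by omega),
    add_zero] at h

theorem succ_succ_mul_x_eq_zero (hcube : ∀ a : A, a * a * a = 0)
    (hhalf : ∀ v : A, v + v = 0 → v = 0) (he : IsRightNormedPowers x e)
    (hN : ProductsVanishBelow e N) {m : ℕ} (hm : 1 ≤ m) (hmN : m + 3 = N)
    (h2 : e 2 * e (m + 1) = 0) : e (m + 2) * x = 0 := by
  have h := cube_polarization hcube hhalf x (e (m + 1))
  rw [← he.two_eq, h2, ← he.succ (m + 1) (by omega),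
    he.mul_x_eq_zero hN (p := m + 1) (by omega) (by omega)] at h
  simpa only [zero_add, zero_mul, add_zero] using h

theorem mul_eq_zero_of_add_eq (hcube : ∀ a : A, a * a * a = 0)
    (hsq : ∀ a : A, a * a * (a * a) = 0) (hhalf : ∀ v : A, v + v = 0 → v = 0)
    (he : IsRightNormedPowers x e) (hN : ProductsVanishBelow e N) {k l : ℕ} (hk : 2 ≤ k)
    (hl : 1 ≤ l) (hkl : k + l = N) : e k * e l = 0 := by
  rcases show (k = 2 ∧ l = 1) ∨ (3 ≤ k ∧ l = 1) ∨ (k = 2 ∧ 2 ≤ l) ∨ (3 ≤ k ∧ 2 ≤ l) from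
      by omega with ⟨rfl, rfl⟩ | ⟨hk, rfl⟩ | ⟨rfl, hl⟩ | ⟨hk, hl⟩
  · rw [he.two_eq, he.one]
    exact hcube x
  · obtain ⟨m, rfl⟩ : ∃ m, k = m + 2 := ⟨k - 2, by omega⟩
    rw [he.one]
    exact he.succ_succ_mul_x_eq_zero hcube hhalf hN (by omega) (by omega)
      (he.two_mul_eq_zero hcube hsq hhalf hN (by omega) (by omega))
  · obtain ⟨m, rfl⟩ : ∃ m, l = m + 1 := ⟨l - 1, by omega⟩
    exact he.two_mul_eq_zero hcube hsq hhalf hN (by omega) (by omega)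
  · exact he.mul_eq_zero_of_three_le hcube hsq hhalf hN hk hl hkl

theorem productsVanishBelow (hcube : ∀ a : A, a * a * a = 0)
    (hsq : ∀ a : A, a * a * (a * a) = 0) (hhalf : ∀ v : A, v + v = 0 → v = 0)
    (he : IsRightNormedPowers x e) (N : ℕ) : ProductsVanishBelow e N := by
  induction N with
  | zero => exact fun k l _ _ h => absurd h (Nat.not_lt_zero _)
  | succ N ih =>
    intro k l hk hl h
    rcases Nat.lt_succ_iff_lt_or_eq.mp h with h | h
    · exact ih k l hk hl h
    · exact he.mul_eq_zero_of_add_eq hcube hsq hhalf ih hk hl h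

end IsRightNormedPowers

end RightNormedPowers

theorem stmt_0_general {K A : Type*} [Field K] [NonUnitalNonAssocRing A] [Module K A]
    (hchar : (2 : K) ≠ 0)
    (h1 : ∀ a : A, leibTriple a a a = 0)
    (h2 : ∀ a : A, leibTriple (a * a) a a = 0)
    (x : A) (e : ℕ → A) (he1 : e 1 = x)
    (heS : ∀ n : ℕ, 1 ≤ n → e (n + 1) = x * e n) :
    ∀ k l : ℕ, 1 < k → 0 < l → e k * e l = 0 := by
  have hcube (a : A) : a * a * a = 0 := by
    simpa only [leibTriple, sub_add_cancel] using h1 a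
  have hsq (a : A) : a * a * (a * a) = 0 := by
    simpa only [leibTriple, hcube a, zero_mul, mul_zero, zero_sub, add_zero, neg_eq_zero]
      using h2 a
  intro k l hk hl
  exact IsRightNormedPowers.productsVanishBelow hcube hsq
    (fun _ => eq_zero_of_add_self_eq_zero hchar) ⟨he1, heS⟩ (k + l + 1) k l hk hl (by omega)

theorem stmt_0 {K A : Type*} [Field K] [NonUnitalNonAssocRing A] [Module K A]
    [SMulCommClass K A A] [IsScalarTower K A A] (hchar : (2 : K) ≠ 0)
    (h1 : ∀ a : A, leibTriple a a a = 0)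
    (h2 : ∀ a : A, leibTriple (a * a) a a = 0)
    (x : A) (e : ℕ → A) (he1 : e 1 = x)
    (heS : ∀ n : ℕ, 1 ≤ n → e (n + 1) = x * e n) :
    ∀ k l : ℕ, 1 < k → 0 < l → e k * e l = 0 :=
  stmt_0_general hchar h1 h2 x e he1 heS
end

section
/- An algebra A over a field of characteristic not 2 is a unary Leibniz algebra (every one-generated subalgebra is a left Leibniz algebra) if and only if A satisfies the identities ⟨a,a,a⟩ = 0 and ⟨aa,a,a⟩ = 0 for all a ∈ A. -/
theorem isSMulRegular_two_of_two_ne_zero {K A : Type*} [DivisionSemiring K] [AddCommMonoid A]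
    [Module K A] (hchar : (2 : K) ≠ 0) : IsSMulRegular A 2 :=
  fun _ _ h => hchar.isUnit.isSMulRegular A (by simpa only [two_smul, two_nsmul] using h)

section Linearization

variable {A : Type*} [NonUnitalNonAssocRing A]

theorem eq_zero_of_add_self_eq_zero_s1 (h2 : IsSMulRegular A 2) {z : A} (h : z + z = 0) : z = 0 :=
  h2 (show 2 • z = 2 • (0 : A) by rw [two_nsmul, smul_zero, h])

theorem cube_linearization (h2 : IsSMulRegular A 2) (hcube : ∀ a : A, a * a * a = 0)
    (a b : A) :
    a * b * a + b * a * a + a * a * b = 0 := by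
  refine eq_zero_of_add_self_eq_zero_s1 h2 ?_
  linear_combination (norm := (simp only [add_mul, mul_add, sub_mul, mul_sub]; abel))
    hcube (a + b) - hcube (a - b) - 2 • hcube b

theorem cube_full_linearization (h2 : IsSMulRegular A 2) (hcube : ∀ a : A, a * a * a = 0)
    (a b c : A) :
    a * b * c + c * b * a + b * a * c + b * c * a + a * c * b + c * a * b = 0 := by
  linear_combination (norm := (simp only [add_mul, mul_add]; abel))
    cube_linearization h2 hcube (a + c) b - cube_linearization h2 hcube a b
      - cube_linearization h2 hcube c b

theorem fourth_power_linearization_odd (h2 : IsSMulRegular A 2)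
    (hfourth : ∀ a : A, a * a * (a * a) = 0) (a b : A) :
    a * a * (a * b + b * a) + (a * b + b * a) * (a * a)
      + (a * b + b * a) * (b * b) + b * b * (a * b + b * a) = 0 := by
  refine eq_zero_of_add_self_eq_zero_s1 h2 ?_
  linear_combination (norm := (simp only [add_mul, mul_add, sub_mul, mul_sub]; abel))
    hfourth (a + b) - hfourth (a - b)

theorem fourth_power_linearization_even (h2 : IsSMulRegular A 2)
    (hfourth : ∀ a : A, a * a * (a * a) = 0) (a b : A) :
    a * a * (b * b) + b * b * (a * a) + (a * b + b * a) * (a * b + b * a) = 0 := by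
  refine eq_zero_of_add_self_eq_zero_s1 h2 ?_
  linear_combination (norm := (simp only [add_mul, mul_add, sub_mul, mul_sub]; abel))
    hfourth (a + b) + hfourth (a - b) - 2 • hfourth a - 2 • hfourth b

theorem fourth_power_linearization_even_polarized (h2 : IsSMulRegular A 2)
    (hfourth : ∀ a : A, a * a * (a * a) = 0) (a c b : A) :
    (a * c + c * a) * (b * b) + b * b * (a * c + c * a)
      + (a * b + b * a) * (c * b + b * c) + (c * b + b * c) * (a * b + b * a) = 0 := by
  linear_combination (norm := (simp only [add_mul, mul_add]; abel))
    fourth_power_linearization_even h2 hfourth (a + c) b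
      - fourth_power_linearization_even h2 hfourth a b
      - fourth_power_linearization_even h2 hfourth c b

end Linearization

section LeibTriple

variable {A : Type*} [NonUnitalNonAssocRing A]

theorem leibTriple_add_left (a a' b c : A) :
    leibTriple (a + a') b c = leibTriple a b c + leibTriple a' b c := by
  simp only [leibTriple, add_mul, mul_add]; abel

theorem leibTriple_add_middle (a b b' c : A) :
    leibTriple a (b + b') c = leibTriple a b c + leibTriple a b' c := by
  simp only [leibTriple, add_mul, mul_add]; abel

theorem leibTriple_add_right (a b c c' : A) :
    leibTriple a b (c + c') = leibTriple a b c + leibTriple a b c' := by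
  simp only [leibTriple, mul_add]; abel

end LeibTriple

theorem leibTriple_smul_right {K A : Type*} [Monoid K] [NonUnitalNonAssocRing A]
    [DistribMulAction K A] [SMulCommClass K A A] (r : K) (a b c : A) :
    leibTriple a b (r • c) = r • leibTriple a b c := by
  simp only [leibTriple, mul_smul_comm, smul_sub, smul_add]

section Span

open Submodule

variable {K A : Type*} [CommSemiring K] [NonUnitalNonAssocRing A] [Module K A]
  [SMulCommClass K A A] [IsScalarTower K A A]

theorem mul_mem_span_of_forall_mul_mem_span {s : Set A}
    (hs : ∀ a ∈ s, ∀ b ∈ s, a * b ∈ span K s) {u v : A} (hu : u ∈ span K s)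
    (hv : v ∈ span K s) : u * v ∈ span K s := by
  have huv := apply_mem_map₂ (LinearMap.mul K A) hu hv
  rw [map₂_span_span] at huv
  exact span_le.2 (Set.image2_subset_iff.2 hs) huv

theorem mem_span_of_mem_adjoin_of_forall_mul_mem_span {s : Set A}
    (hs : ∀ a ∈ s, ∀ b ∈ s, a * b ∈ span K s) {a : A} (ha : a ∈ NonUnitalAlgebra.adjoin K s) :
    a ∈ span K s :=
  NonUnitalAlgebra.adjoin_le (S := (span K s).toNonUnitalSubalgebra
    fun _ _ => mul_mem_span_of_forall_mul_mem_span hs) subset_span ha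

theorem leibTriple_smul_left (r : K) (a b c : A) :
    leibTriple (r • a) b c = r • leibTriple a b c := by
  simp only [leibTriple, smul_mul_assoc, mul_smul_comm, smul_sub, smul_add]

theorem leibTriple_smul_middle (r : K) (a b c : A) :
    leibTriple a (r • b) c = r • leibTriple a b c := by
  simp only [leibTriple, smul_mul_assoc, mul_smul_comm, smul_sub, smul_add]

theorem leibTriple_eq_zero_of_mem_span {s : Set A}
    (hs : ∀ a ∈ s, ∀ b ∈ s, ∀ c ∈ s, leibTriple a b c = 0) {a b c : A} (ha : a ∈ span K s)
    (hb : b ∈ span K s) (hc : c ∈ span K s) : leibTriple a b c = 0 := by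
  induction ha using span_induction with
  | mem a ha =>
    induction hb using span_induction with
    | mem b hb =>
      induction hc using span_induction with
      | mem c hc => exact hs a ha b hb c hc
      | zero => simp [leibTriple]
      | add c c' _ _ h h' => rw [leibTriple_add_right, h, h', add_zero]
      | smul r c _ h => rw [leibTriple_smul_right, h, smul_zero]
    | zero => simp [leibTriple]
    | add b b' _ _ h h' => rw [leibTriple_add_middle, h, h', add_zero]
    | smul r b _ h => rw [leibTriple_smul_middle, h, smul_zero]
  | zero => simp [leibTriple]
  | add a a' _ _ h h' => rw [leibTriple_add_left, h, h', add_zero]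
  | smul r a _ h => rw [leibTriple_smul_left, h, smul_zero]

end Span

section RightNormedPowers

variable {A : Type*} [NonUnitalNonAssocRing A]

def rightNormedPow (x : A) : ℕ → A
  | 0 => x
  | n + 1 => x * rightNormedPow x n

@[simp]
theorem rightNormedPow_zero_mul (x : A) (n : ℕ) :
    rightNormedPow x 0 * rightNormedPow x n = rightNormedPow x (n + 1) :=
  rfl

theorem rightNormedPow_succ_mul_add (h2 : IsSMulRegular A 2) (hcube : ∀ a : A, a * a * a = 0)
    {x : A} {t i j : ℕ}
    (hprod : ∀ n m, 1 ≤ n → n + m ≤ t → rightNormedPow x n * rightNormedPow x m = 0)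
    (hi : 1 ≤ i) (hj : 1 ≤ j) (hij : i + j ≤ t) :
    rightNormedPow x (i + 1) * rightNormedPow x j
      + rightNormedPow x (j + 1) * rightNormedPow x i = 0 := by
  have h := cube_full_linearization h2 hcube (rightNormedPow x i) (rightNormedPow x 0)
    (rightNormedPow x j)
  simpa [hprod i 0 hi (by omega), hprod j 0 hj (by omega), hprod i j hi hij,
    hprod j i hj (by omega)] using h

theorem rightNormedPow_succ_mul_succ_add (h2 : IsSMulRegular A 2)
    (hfourth : ∀ a : A, a * a * (a * a) = 0) {x : A} {t i j : ℕ}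
    (hprod : ∀ n m, 1 ≤ n → n + m ≤ t → rightNormedPow x n * rightNormedPow x m = 0)
    (hi : 1 ≤ i) (hj : 1 ≤ j) (hij : i + j ≤ t) :
    rightNormedPow x (i + 1) * rightNormedPow x (j + 1)
      + rightNormedPow x (j + 1) * rightNormedPow x (i + 1) = 0 := by
  have h := fourth_power_linearization_even_polarized h2 hfourth (rightNormedPow x i)
    (rightNormedPow x j) (rightNormedPow x 0)
  simpa [hprod i 0 hi (by omega), hprod j 0 hj (by omega), hprod i j hi hij,
    hprod j i hj (by omega)] using h

theorem rightNormedPow_succ_mul_succ_eq (h2 : IsSMulRegular A 2)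
    (hcube : ∀ a : A, a * a * a = 0) (hfourth : ∀ a : A, a * a * (a * a) = 0)
    {x : A} {t q r : ℕ}
    (hprod : ∀ n m, 1 ≤ n → n + m ≤ t → rightNormedPow x n * rightNormedPow x m = 0)
    (hq : 1 ≤ q) (hr : 1 ≤ r) (hqr : q + r + 1 = t) :
    rightNormedPow x (q + 1) * rightNormedPow x (r + 1)
      = rightNormedPow x (q + 1 + 1) * rightNormedPow x r := by
  linear_combination (norm := abel)
    rightNormedPow_succ_mul_succ_add h2 hfourth hprod hq hr (by omega)
      - rightNormedPow_succ_mul_add h2 hcube hprod (j := q + 1) hr (by omega) (by omega)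

theorem rightNormedPow_mul_eq_top_mul_one (h2 : IsSMulRegular A 2)
    (hcube : ∀ a : A, a * a * a = 0) (hfourth : ∀ a : A, a * a * (a * a) = 0)
    {x : A} {t q r : ℕ}
    (hprod : ∀ n m, 1 ≤ n → n + m ≤ t → rightNormedPow x n * rightNormedPow x m = 0)
    (hq : 2 ≤ q) (hr : 1 ≤ r) (hqr : q + r = t + 1) :
    rightNormedPow x q * rightNormedPow x r = rightNormedPow x t * rightNormedPow x 1 := by
  induction r generalizing q with
  | zero => omega
  | succ r ih =>
    obtain rfl | hr := Nat.eq_zero_or_pos r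
    · obtain rfl : q = t := by omega
      rfl
    · obtain ⟨q, rfl⟩ : ∃ q', q = q' + 1 := ⟨q - 1, by omega⟩
      rw [rightNormedPow_succ_mul_succ_eq h2 hcube hfourth hprod (by omega) hr (by omega)]
      exact ih (by omega) hr (by omega)

theorem rightNormedPow_mul_one_eq_zero (h2 : IsSMulRegular A 2)
    (hcube : ∀ a : A, a * a * a = 0) (hfourth : ∀ a : A, a * a * (a * a) = 0) {x : A} {t : ℕ}
    (hprod : ∀ n m, 1 ≤ n → n + m ≤ t → rightNormedPow x n * rightNormedPow x m = 0)
    (ht : 2 ≤ t) :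
    rightNormedPow x t * rightNormedPow x 1 = 0 := by
  obtain ⟨s, rfl⟩ : ∃ s, t = s + 2 := ⟨t - 2, by omega⟩
  refine eq_zero_of_add_self_eq_zero_s1 h2 ?_
  have h := rightNormedPow_succ_mul_add h2 hcube hprod (i := 1) (j := s + 1) le_rfl (by omega)
    (by omega)
  rwa [rightNormedPow_mul_eq_top_mul_one h2 hcube hfourth hprod le_rfl (by omega) (by omega)]
    at h

theorem rightNormedPow_succ_mul_self (h2 : IsSMulRegular A 2)
    (hfourth : ∀ a : A, a * a * (a * a) = 0) {x : A} {k : ℕ}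
    (h0 : rightNormedPow x k * rightNormedPow x 0 = 0)
    (hk : rightNormedPow x k * rightNormedPow x k = 0) :
    rightNormedPow x (k + 1) * rightNormedPow x (k + 1) = 0 := by
  simpa [h0, hk] using fourth_power_linearization_even h2 hfourth (rightNormedPow x 0)
    (rightNormedPow x k)

theorem rightNormedPow_one_mul_succ_add (h2 : IsSMulRegular A 2)
    (hfourth : ∀ a : A, a * a * (a * a) = 0) {x : A} {k : ℕ}
    (h0 : rightNormedPow x k * rightNormedPow x 0 = 0)
    (hk : rightNormedPow x k * rightNormedPow x k = 0) :
    rightNormedPow x 1 * rightNormedPow x (k + 1)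
      + rightNormedPow x (k + 1) * rightNormedPow x 1 = 0 := by
  simpa [h0, hk] using fourth_power_linearization_odd h2 hfourth (rightNormedPow x 0)
    (rightNormedPow x k)

theorem rightNormedPow_succ_mul_zero (h2 : IsSMulRegular A 2)
    (hcube : ∀ a : A, a * a * a = 0) {x : A} {k : ℕ}
    (h0 : rightNormedPow x k * rightNormedPow x 0 = 0)
    (h1 : rightNormedPow x 1 * rightNormedPow x k = 0) :
    rightNormedPow x (k + 1) * rightNormedPow x 0 = 0 := by
  simpa [h0, h1] using cube_linearization h2 hcube (rightNormedPow x 0) (rightNormedPow x k)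

/-- The squares are carried one index ahead of the other products: `hsq` at `k = t - 1` is what
makes `rightNormedPow x 1 * rightNormedPow x t` vanish. -/
theorem rightNormedPow_mul_eq_zero_step (h2 : IsSMulRegular A 2)
    (hcube : ∀ a : A, a * a * a = 0) (hfourth : ∀ a : A, a * a * (a * a) = 0) {x : A} {t : ℕ}
    (ht : 2 ≤ t)
    (hprod : ∀ n m, 1 ≤ n → n + m ≤ t → rightNormedPow x n * rightNormedPow x m = 0)
    (hsq : ∀ k, 1 ≤ k → k < t → rightNormedPow x k * rightNormedPow x k = 0) :
    (∀ n m, 1 ≤ n → n + m ≤ t + 1 → rightNormedPow x n * rightNormedPow x m = 0) ∧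
      ∀ k, 1 ≤ k → k < t + 1 → rightNormedPow x k * rightNormedPow x k = 0 := by
  obtain ⟨s, rfl⟩ : ∃ s, t = s + 1 := ⟨t - 1, by omega⟩
  have hs0 := hprod s 0 (by omega) (by omega)
  have hss := hsq s (by omega) (by omega)
  have htop := rightNormedPow_mul_one_eq_zero h2 hcube hfourth hprod ht
  have hone : rightNormedPow x 1 * rightNormedPow x (s + 1) = 0 := by
    simpa [htop] using rightNormedPow_one_mul_succ_add h2 hfourth hs0 hss
  refine ⟨fun n m hn hnm => ?_, fun k hk hkt => ?_⟩
  · obtain hle | ⟨rfl, rfl⟩ | ⟨rfl, rfl⟩ | ⟨hn, hm, hnm⟩ :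
        n + m ≤ s + 1 ∨ (n = s + 2 ∧ m = 0) ∨ (n = 1 ∧ m = s + 1) ∨
          (2 ≤ n ∧ 1 ≤ m ∧ n + m = s + 2) := by omega
    · exact hprod n m hn hle
    · exact rightNormedPow_succ_mul_zero h2 hcube (hprod (s + 1) 0 (by omega) le_rfl) hone
    · exact hone
    · rw [rightNormedPow_mul_eq_top_mul_one h2 hcube hfourth hprod hn hm hnm, htop]
  · obtain hk' | rfl : k < s + 1 ∨ k = s + 1 := by omega
    · exact hsq k hk hk'
    · exact rightNormedPow_succ_mul_self h2 hfourth hs0 hss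

theorem rightNormedPow_mul_eq_zero (h2 : IsSMulRegular A 2)
    (hcube : ∀ a : A, a * a * a = 0) (hfourth : ∀ a : A, a * a * (a * a) = 0) (x : A) (n m : ℕ)
    (hn : 1 ≤ n) :
    rightNormedPow x n * rightNormedPow x m = 0 := by
  have h10 : rightNormedPow x 1 * rightNormedPow x 0 = 0 := hcube x
  have h11 : rightNormedPow x 1 * rightNormedPow x 1 = 0 := hfourth x
  have key : ∀ s, (∀ n m, 1 ≤ n → n + m ≤ s + 2 →
      rightNormedPow x n * rightNormedPow x m = 0) ∧
      ∀ k, 1 ≤ k → k < s + 2 → rightNormedPow x k * rightNormedPow x k = 0 := by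
    intro s
    induction s with
    | zero =>
      refine ⟨fun n m hn hnm => ?_, fun k hk hk2 => ?_⟩
      · obtain ⟨rfl, rfl⟩ | ⟨rfl, rfl⟩ | ⟨rfl, rfl⟩ :
            (n = 1 ∧ m = 0) ∨ (n = 1 ∧ m = 1) ∨ (n = 2 ∧ m = 0) := by omega
        exacts [h10, h11, rightNormedPow_succ_mul_zero h2 hcube h10 h11]
      · obtain rfl : k = 1 := by omega
        exact h11
    | succ s ih => exact rightNormedPow_mul_eq_zero_step h2 hcube hfourth (by omega) ih.1 ih.2
  exact (key (n + m)).1 n m hn (by omega)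

theorem leibTriple_rightNormedPow {x : A}
    (hprod : ∀ n m, 1 ≤ n → rightNormedPow x n * rightNormedPow x m = 0) (i j k : ℕ) :
    leibTriple (rightNormedPow x i) (rightNormedPow x j) (rightNormedPow x k) = 0 := by
  rcases i with _ | i <;> rcases j with _ | j <;> simp [leibTriple, hprod]

end RightNormedPowers

theorem mem_span_rightNormedPow_of_mem_adjoin {K A : Type*} [CommSemiring K]
    [NonUnitalNonAssocRing A] [Module K A] [SMulCommClass K A A] [IsScalarTower K A A] {x a : A}
    (hprod : ∀ n m, 1 ≤ n → rightNormedPow x n * rightNormedPow x m = 0)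
    (ha : a ∈ NonUnitalAlgebra.adjoin K {x}) :
    a ∈ Submodule.span K (Set.range (rightNormedPow x)) := by
  refine mem_span_of_mem_adjoin_of_forall_mul_mem_span ?_
    (NonUnitalAlgebra.adjoin_mono (Set.singleton_subset_iff.2 (Set.mem_range_self 0)) ha)
  rintro _ ⟨_ | i, rfl⟩ _ ⟨j, rfl⟩
  · exact Submodule.subset_span ⟨j + 1, rfl⟩
  · rw [hprod (i + 1) j i.succ_pos]
    exact zero_mem _

theorem stmt_1 {K A : Type*} [Field K] [NonUnitalNonAssocRing A] [Module K A]
    [SMulCommClass K A A] [IsScalarTower K A A] (hchar : (2 : K) ≠ 0) :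
    (∀ x : A, ∀ a ∈ NonUnitalAlgebra.adjoin K ({x} : Set A),
      ∀ b ∈ NonUnitalAlgebra.adjoin K ({x} : Set A),
      ∀ c ∈ NonUnitalAlgebra.adjoin K ({x} : Set A), leibTriple a b c = 0) ↔
    (∀ a : A, leibTriple a a a = 0 ∧ leibTriple (a * a) a a = 0) := by
  constructor
  · intro H a
    have ha := NonUnitalAlgebra.self_mem_adjoin_singleton K a
    exact ⟨H a a ha a ha a ha, H a (a * a) (mul_mem ha ha) a ha a ha⟩
  · intro h x a ha b hb c hc
    have hcube : ∀ a : A, a * a * a = 0 := fun a => by simpa [leibTriple] using (h a).1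
    have hfourth : ∀ a : A, a * a * (a * a) = 0 := fun a => by
      simpa [leibTriple, hcube a] using (h a).2
    have hprod := rightNormedPow_mul_eq_zero (isSMulRegular_two_of_two_ne_zero hchar) hcube
      hfourth x
    have hspan {u : A} (hu : u ∈ NonUnitalAlgebra.adjoin K {x}) :=
      mem_span_rightNormedPow_of_mem_adjoin hprod hu
    refine leibTriple_eq_zero_of_mem_span ?_ (hspan ha) (hspan hb) (hspan hc)
    rintro _ ⟨i, rfl⟩ _ ⟨j, rfl⟩ _ ⟨k, rfl⟩
    exact leibTriple_rightNormedPow hprod i j k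
end

section
/- Every algebra over a field of characteristic not 2 satisfying ⟨a,a,b⟩ = 0, ⟨a,b,a⟩ = 0, and ⟨a,b,ab⟩ = 0 for all a,b also satisfies ⟨a,a,a⟩ = 0 and ⟨aa,a,a⟩ = 0; i.e., every binary Leibniz algebra is unary Leibniz. -/
theorem leibTriple_self_self {A : Type*} [NonUnitalNonAssocRing A] (a b : A) :
    leibTriple a a b = a * a * b :=
  sub_add_cancel _ _

theorem stmt_10_general {A : Type*} [NonUnitalNonAssocRing A]
    (h1 : ∀ a b : A, leibTriple a a b = 0) :
    ∀ a : A, leibTriple a a a = 0 ∧ leibTriple (a * a) a a = 0 := by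
  have hsq (a b : A) : a * a * b = 0 := leibTriple_self_self a b ▸ h1 a b
  intro a
  refine ⟨h1 a a, ?_⟩
  simp only [leibTriple, hsq, zero_mul, mul_zero, sub_zero, add_zero]

theorem stmt_10 {K A : Type*} [Field K] [NonUnitalNonAssocRing A] [Module K A]
    [SMulCommClass K A A] [IsScalarTower K A A] (hchar : (2 : K) ≠ 0)
    (h1 : ∀ a b : A, leibTriple a a b = 0)
    (h2 : ∀ a b : A, leibTriple a b a = 0)
    (h3 : ∀ a b : A, leibTriple a b (a * b) = 0) :
    ∀ a : A, leibTriple a a a = 0 ∧ leibTriple (a * a) a a = 0 :=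
  stmt_10_general h1
end

section
/- The four-dimensional anticommutative algebra A with basis e1, e2, e3, e4 and nonzero products e1e2 = e3 = -e2e1, e1e4 = e1 = -e4e1, e2e4 = e2 = -e4e2, e3e4 = -e3 = -e4e3 satisfies ⟨a,a,b⟩ = 0, ⟨a,b,a⟩ = 0, and ⟨a,b,ab⟩ = 0 for all a,b, but is not a Leibniz algebra since ⟨e1,e2,e4⟩ = -3e3 ≠ 0. -/
/-- Multiplication of the 4-dimensional anticommutative algebra A with
e1e2 = e3, e1e4 = e1, e2e4 = e2, e3e4 = -e3 (extended bilinearly and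
anticommutatively); basis vectors are indexed 0,1,2,3. -/
def mulA {K : Type*} [Field K] (v w : Fin 4 → K) : Fin 4 → K :=
  ![v 0 * w 3 - v 3 * w 0,
    v 1 * w 3 - v 3 * w 1,
    (v 0 * w 1 - v 1 * w 0) - (v 2 * w 3 - v 3 * w 2),
    0]

/-- The Leibniz discriminant ⟨a,b,c⟩ with respect to mulA. -/
def ltA {K : Type*} [Field K] (a b c : Fin 4 → K) : Fin 4 → K :=
  mulA (mulA a b) c - mulA a (mulA b c) + mulA b (mulA a c)

/-!
The discriminant is `⟨a,b,c⟩ = -3 · D(a,b,c) · e3`, where `D` is the determinant of the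
`e1, e2, e4`-coordinates of `a, b, c`. Hence it is alternating, which gives the first two
identities, and the `e1, e2, e4`-coordinates of `ab` are `b₄ a - a₄ b`, which gives the third.
-/

theorem Matrix.det_of_vec3_smul_add_smul {R : Type*} [CommRing R] (u v : Fin 3 → R) (s t : R) :
    (Matrix.of ![u, v, s • u + t • v]).det = 0 := by
  have h := Matrix.det_updateRow_sum (Matrix.of ![u, v, 0]) 2 ![s, t, 0]
  simp only [Fin.sum_univ_three] at h
  convert h using 2
  · ext i j; fin_cases i <;> simp
  · simp

section

variable {K : Type*} [Field K]

def projA (v : Fin 4 → K) : Fin 3 → K := ![v 0, v 1, v 3]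

def volA (a b c : Fin 4 → K) : K :=
  (Matrix.of ![projA a, projA b, projA c]).det

theorem ltA_eq_smul_volA (a b c : Fin 4 → K) :
    ltA a b c = (-3 * volA a b c) • Pi.single 2 1 := by
  funext i
  fin_cases i <;> simp [ltA, mulA, volA, projA, Matrix.det_fin_three] <;> ring

theorem projA_mulA (a b : Fin 4 → K) :
    projA (mulA a b) = b 3 • projA a + (-a 3) • projA b := by
  funext i
  fin_cases i <;> simp [projA, mulA] <;> ring

theorem volA_self_left (a b : Fin 4 → K) : volA a a b = 0 :=
  Matrix.det_zero_of_row_eq (i := 0) (j := 1) (by decide) rfl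

theorem volA_self_right (a b : Fin 4 → K) : volA a b a = 0 :=
  Matrix.det_zero_of_row_eq (i := 0) (j := 2) (by decide) rfl

theorem volA_mulA (a b : Fin 4 → K) : volA a b (mulA a b) = 0 := by
  rw [volA, projA_mulA]
  exact Matrix.det_of_vec3_smul_add_smul _ _ _ _

theorem volA_single : volA (Pi.single 0 1) (Pi.single 1 1) (Pi.single 3 (1 : K)) = 1 := by
  simp [volA, projA, Matrix.det_fin_three]

theorem ltA_self_left (a b : Fin 4 → K) : ltA a a b = 0 := by
  simp [ltA_eq_smul_volA, volA_self_left]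

theorem ltA_self_right (a b : Fin 4 → K) : ltA a b a = 0 := by
  simp [ltA_eq_smul_volA, volA_self_right]

theorem ltA_mulA (a b : Fin 4 → K) : ltA a b (mulA a b) = 0 := by
  simp [ltA_eq_smul_volA, volA_mulA]

theorem ltA_single :
    ltA (Pi.single 0 1) (Pi.single 1 1) (Pi.single 3 1) =
      (-3 : K) • (Pi.single 2 1 : Fin 4 → K) := by
  rw [ltA_eq_smul_volA, volA_single, mul_one]

end

theorem stmt_11_general {K : Type*} [Field K] (h3 : (3 : K) ≠ 0) :
    (∀ a b : Fin 4 → K, ltA a a b = 0 ∧ ltA a b a = 0 ∧ ltA a b (mulA a b) = 0) ∧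
    ltA (Pi.single 0 1) (Pi.single 1 1) (Pi.single 3 1) =
      (-3 : K) • (Pi.single 2 1 : Fin 4 → K) ∧
    ltA (Pi.single 0 1) (Pi.single 1 1) (Pi.single 3 1) ≠ (0 : Fin 4 → K) := by
  refine ⟨fun a b => ⟨ltA_self_left a b, ltA_self_right a b, ltA_mulA a b⟩, ltA_single, ?_⟩
  rw [ltA_single, Ne, smul_eq_zero, not_or]
  exact ⟨neg_ne_zero.mpr h3, Pi.single_ne_zero_iff.mpr one_ne_zero⟩

theorem stmt_11 {K : Type*} [Field K] (h2 : (2 : K) ≠ 0) (h3 : (3 : K) ≠ 0) :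
    (∀ a b : Fin 4 → K, ltA a a b = 0 ∧ ltA a b a = 0 ∧ ltA a b (mulA a b) = 0) ∧
    ltA (Pi.single 0 1) (Pi.single 1 1) (Pi.single 3 1) =
      (-3 : K) • (Pi.single 2 1 : Fin 4 → K) ∧
    ltA (Pi.single 0 1) (Pi.single 1 1) (Pi.single 3 1) ≠ (0 : Fin 4 → K) :=
  stmt_11_general h3
end

section
/- Every Malcev dialgebra over a field of characteristic not 2 satisfies the binary Lie dialgebra identity: a(b(cd)) + a(c(bd)) - ((ac)b)d - ((ab)c)d - b(a(cd)) - c(a(bd)) + b((ca)d) + c((ba)d) = 0 for all a,b,c,d. -/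
theorem stmt_19_general {A : Type*} [NonUnitalNonAssocRing A]
    (anti : ∀ a b c : A, (a * b) * c + (b * a) * c = 0)
    (dimalcev : ∀ a b c d : A,
      a * (b * (c * d)) - b * (c * (a * d)) - c * ((a * b) * d)
        - (a * c) * (b * d) - (a * (b * c)) * d = 0) :
    ∀ a b c d : A,
      a * (b * (c * d)) + a * (c * (b * d)) - ((a * c) * b) * d - ((a * b) * c) * d
        - b * (a * (c * d)) - c * (a * (b * d)) + b * ((c * a) * d)
        + c * ((b * a) * d) = 0 := by
  intro a b c d
  linear_combination (norm := abel) -dimalcev b a c d - dimalcev c a b d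
    - anti b c (a * d) - anti b (a * c) d - anti c (a * b) d

theorem stmt_19 {K A : Type*} [Field K] [NonUnitalNonAssocRing A] [Module K A]
    [SMulCommClass K A A] [IsScalarTower K A A] (hchar : (2 : K) ≠ 0)
    (anti : ∀ a b c : A, (a * b) * c + (b * a) * c = 0)
    (dimalcev : ∀ a b c d : A,
      a * (b * (c * d)) - b * (c * (a * d)) - c * ((a * b) * d)
        - (a * c) * (b * d) - (a * (b * c)) * d = 0) :
    ∀ a b c d : A,
      a * (b * (c * d)) + a * (c * (b * d)) - ((a * c) * b) * d - ((a * b) * c) * d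
        - b * (a * (c * d)) - c * (a * (b * d)) + b * ((c * a) * d)
        + c * ((b * a) * d) = 0 :=
  stmt_19_general anti dimalcev
end
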